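/- (PNM stopping condition implies RB-NE, pure deviations.) Suppose μ is a mixed strategy for player 1 with supp μ ⊆ S_A and ν is a mixed strategy for player 2 with supp ν ⊆ S_B. Let a* ∈ S_A maximize a ↦ U(a, ν) over S_A and let b* ∈ S_B minimize b ↦ U(μ, b) over S_B. If u_BRs = U(a*, ν) - U(μ, b*) ≤ 0, then U(μ, ν) = U(a*, ν) and U(μ, ν) = U(μ, b*); consequently (μ, ν) is a resource-bounded Nash equilibrium: U(a, ν) ≤ U(μ, ν) for every a ∈ S_A and U(μ, b) ≥ U(μ, ν) for every b ∈ S_B. -/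
import Mathlib


open Finset

/-- A mixed strategy: nonnegative weights summing to 1. -/
def IsMixed {A : Type*} [Fintype A] (μ : A → ℝ) : Prop :=
  (∀ a, 0 ≤ μ a) ∧ ∑ a, μ a = 1

/-- Expected payoff of player 1 in the zero-sum game `u`. -/
def payoff {A B : Type*} [Fintype A] [Fintype B]
    (u : A → B → ℝ) (μ : A → ℝ) (ν : B → ℝ) : ℝ :=
  ∑ a, ∑ b, μ a * ν b * u a b

/-- The Dirac (pure) mixed strategy at `a`. -/
def dirac {A : Type*} [DecidableEq A] (a : A) : A → ℝ :=
  fun a' => if a' = a then 1 else 0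

lemma payoff_dirac_left {A B : Type*} [Fintype A] [Fintype B] [DecidableEq A]
    (u : A → B → ℝ) (a : A) (ν : B → ℝ) :
    payoff u (dirac a) ν = ∑ b, ν b * u a b := by
  simp [payoff, dirac, ite_mul, zero_mul, one_mul, Finset.sum_ite_eq']

lemma payoff_dirac_right {A B : Type*} [Fintype A] [Fintype B] [DecidableEq B]
    (u : A → B → ℝ) (μ : A → ℝ) (b : B) :
    payoff u μ (dirac b) = ∑ a, μ a * u a b := by
  simp [payoff, dirac, mul_ite, mul_zero, mul_one, Finset.sum_ite_eq']

lemma payoff_expand_left {A B : Type*} [Fintype A] [Fintype B] [DecidableEq A]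
    (u : A → B → ℝ) (μ : A → ℝ) (ν : B → ℝ) :
    payoff u μ ν = ∑ a, μ a * payoff u (dirac a) ν := by
  simp only [payoff_dirac_left, Finset.mul_sum]
  unfold payoff
  exact Finset.sum_congr rfl fun a _ => Finset.sum_congr rfl fun b _ => by ring

lemma payoff_expand_right {A B : Type*} [Fintype A] [Fintype B] [DecidableEq B]
    (u : A → B → ℝ) (μ : A → ℝ) (ν : B → ℝ) :
    payoff u μ ν = ∑ b, ν b * payoff u μ (dirac b) := by
  simp only [payoff_dirac_right, Finset.mul_sum]
  unfold payoff
  rw [Finset.sum_comm]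
  exact Finset.sum_congr rfl fun b _ => Finset.sum_congr rfl fun a _ => by ring

theorem pnm_stop_implies_rbne_pure
    {A B : Type*} [Fintype A] [Fintype B] [DecidableEq A] [DecidableEq B]
    [Nonempty A] [Nonempty B]
    (u : A → B → ℝ) (SA : Set A) (SB : Set B)
    (hSA : SA.Nonempty) (hSB : SB.Nonempty)
    (μ : A → ℝ) (hμ : IsMixed μ) (hμsupp : Function.support μ ⊆ SA)
    (ν : B → ℝ) (hν : IsMixed ν) (hνsupp : Function.support ν ⊆ SB)
    (astar : A) (hastar : astar ∈ SA)
    (hmax : ∀ a ∈ SA, payoff u (dirac a) ν ≤ payoff u (dirac astar) ν)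
    (bstar : B) (hbstar : bstar ∈ SB)
    (hmin : ∀ b ∈ SB, payoff u μ (dirac bstar) ≤ payoff u μ (dirac b))
    (hstop : payoff u (dirac astar) ν - payoff u μ (dirac bstar) ≤ 0) :
    payoff u μ ν = payoff u (dirac astar) ν ∧
    payoff u μ ν = payoff u μ (dirac bstar) ∧
    (∀ a ∈ SA, payoff u (dirac a) ν ≤ payoff u μ ν) ∧
    (∀ b ∈ SB, payoff u μ ν ≤ payoff u μ (dirac b)) := by
  obtain ⟨hμ0, hμ1⟩ := hμ
  obtain ⟨hν0, hν1⟩ := hν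
  have hub : payoff u μ ν ≤ payoff u (dirac astar) ν := by
    rw [payoff_expand_left]
    calc ∑ a, μ a * payoff u (dirac a) ν
        ≤ ∑ a, μ a * payoff u (dirac astar) ν := by
          apply Finset.sum_le_sum
          intro a _
          by_cases h : μ a = 0
          · simp [h]
          · exact mul_le_mul_of_nonneg_left (hmax a (hμsupp h)) (hμ0 a)
      _ = payoff u (dirac astar) ν := by rw [← Finset.sum_mul, hμ1, one_mul]
  have hlb : payoff u μ (dirac bstar) ≤ payoff u μ ν := by
    rw [payoff_expand_right u μ ν]
    calc payoff u μ (dirac bstar)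
        = ∑ b, ν b * payoff u μ (dirac bstar) := by
          rw [← Finset.sum_mul, hν1, one_mul]
      _ ≤ ∑ b, ν b * payoff u μ (dirac b) := by
          apply Finset.sum_le_sum
          intro b _
          by_cases h : ν b = 0
          · simp [h]
          · exact mul_le_mul_of_nonneg_left (hmin b (hνsupp h)) (hν0 b)
  have h1 : payoff u μ ν = payoff u (dirac astar) ν := le_antisymm hub (by linarith)
  have h2 : payoff u μ ν = payoff u μ (dirac bstar) := le_antisymm (by linarith) hlb
  refine ⟨h1, h2, fun a ha => h1 ▸ hmax a ha, fun b hb => h2 ▸ hmin b hb⟩
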